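/- Let A₁,...,A_N be 2×2 upper-triangular complex matrices, λ ∈ (0,1) and M > 0, such that: (i) the diagonal entries of every A_j have absolute value at most 1; (ii) every A_j is either diagonal or has at least one diagonal entry of absolute value less than λ; (iii) every off-diagonal entry of every A_j has absolute value at most M. Then sup_{n≥1} max_{i₁,...,i_n} ‖A_{i_n}···A_{i_1}‖ ≤ 1 + 2M/(1−λ). -/

import Mathlib

noncomputable def opNormC (A : Matrix (Fin 2) (Fin 2) ℂ) : ℝ :=
  ‖LinearMap.toContinuousLinearMap (Matrix.toEuclideanLin A)‖

/-- Product A_{σ(n)} ⋯ A_{σ(1)}. -/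
noncomputable def prodW {N : ℕ} (A : Fin N → Matrix (Fin 2) (Fin 2) ℂ) (σ : ℕ → Fin N) :
    ℕ → Matrix (Fin 2) (Fin 2) ℂ
  | 0 => 1
  | n + 1 => A (σ (n + 1)) * prodW A σ n

/-!
The products stay upper triangular with diagonal entries of modulus at most `1`, so everything
hinges on the top-right entry. The potential `(1 - λ) ‖P₀₁‖ + M ‖P₁₁‖` never exceeds `2M`: a
factor contracting the top-left entry shrinks the old `P₀₁` by `λ` and adds at most `M ‖P₁₁‖`,
while a factor contracting the bottom-right entry adds at most `M ‖P₁₁‖` to `P₀₁` but pays for it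
by shrinking `‖P₁₁‖` by `λ`. Finally, a `2 × 2` upper triangular matrix with diagonal entries of
modulus at most `1` has operator norm at most `1 + ‖P₀₁‖`.
-/

lemma fin_two_upper_mul_apply {R : Type*} [Semiring R] {A P : Matrix (Fin 2) (Fin 2) R}
    (hA : A 1 0 = 0) (hP : P 1 0 = 0) :
    (A * P) 1 0 = 0 ∧ (A * P) 0 0 = A 0 0 * P 0 0 ∧ (A * P) 1 1 = A 1 1 * P 1 1 ∧
      (A * P) 0 1 = A 0 0 * P 0 1 + A 0 1 * P 1 1 := by
  simp [Matrix.mul_apply, Fin.sum_univ_two, hA, hP]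

lemma opNormC_le_of_upper {P : Matrix (Fin 2) (Fin 2) ℂ} (h10 : P 1 0 = 0)
    (h00 : ‖P 0 0‖ ≤ 1) (h11 : ‖P 1 1‖ ≤ 1) : opNormC P ≤ 1 + ‖P 0 1‖ := by
  have hP01 : 0 ≤ ‖P 0 1‖ := norm_nonneg _
  refine ContinuousLinearMap.opNorm_le_bound _ (by positivity) fun x => ?_
  have hPx : ∀ i, (Matrix.toEuclideanLin P x) i = P i 0 * x 0 + P i 1 * x 1 := fun i => by
    change Matrix.mulVec P x.ofLp i = _
    simp [Matrix.mulVec, dotProduct, Fin.sum_univ_two]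
  set a := ‖x 0‖
  set b := ‖x 1‖
  have ha : 0 ≤ a := norm_nonneg _
  have hb : 0 ≤ b := norm_nonneg _
  have hy0 : ‖P 0 0 * x 0 + P 0 1 * x 1‖ ≤ a + ‖P 0 1‖ * b := by
    refine (norm_add_le _ _).trans ?_
    rw [norm_mul, norm_mul]
    exact add_le_add_left (mul_le_of_le_one_left ha h00) _
  have hy1 : ‖P 1 1 * x 1‖ ≤ b := by
    rw [norm_mul]
    exact mul_le_of_le_one_left hb h11
  refine le_of_sq_le_sq ?_ (by positivity)
  change ‖Matrix.toEuclideanLin P x‖ ^ 2 ≤ _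
  rw [mul_pow, EuclideanSpace.norm_sq_eq, EuclideanSpace.norm_sq_eq, Fin.sum_univ_two,
    Fin.sum_univ_two, hPx 0, hPx 1, h10, zero_mul, zero_add]
  nlinarith [pow_le_pow_left₀ (norm_nonneg _) hy0 2, pow_le_pow_left₀ (norm_nonneg _) hy1 2,
    mul_nonneg hP01 (sq_nonneg (a - b)), mul_nonneg hP01 (mul_nonneg ha hb), sq_nonneg (‖P 0 1‖ * a)]

def TriangularBound (lam M : ℝ) (P : Matrix (Fin 2) (Fin 2) ℂ) : Prop :=
  P 1 0 = 0 ∧ ‖P 0 0‖ ≤ 1 ∧ ‖P 1 1‖ ≤ 1 ∧ (1 - lam) * ‖P 0 1‖ + M * ‖P 1 1‖ ≤ 2 * M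

lemma triangularBound_one {lam M : ℝ} (hM : 0 ≤ M) : TriangularBound lam M 1 := by
  refine ⟨rfl, by simp, by simp, ?_⟩
  simp only [Matrix.one_apply_ne zero_ne_one, Matrix.one_apply_eq, norm_zero, norm_one]
  linarith

lemma TriangularBound.mul_left {lam M : ℝ} (hlam : lam ≤ 1) {A P : Matrix (Fin 2) (Fin 2) ℂ}
    (hA10 : A 1 0 = 0) (hA00 : ‖A 0 0‖ ≤ 1) (hA11 : ‖A 1 1‖ ≤ 1)
    (hcontract : A 0 1 = 0 ∨ ‖A 0 0‖ < lam ∨ ‖A 1 1‖ < lam) (hA01 : ‖A 0 1‖ ≤ M)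
    (hP : TriangularBound lam M P) : TriangularBound lam M (A * P) := by
  obtain ⟨hP10, hP00, hP11, hpot⟩ := hP
  obtain ⟨e10, e00, e11, e01⟩ := fin_two_upper_mul_apply hA10 hP10
  have hM : 0 ≤ M := (norm_nonneg _).trans hA01
  have h1lam : 0 ≤ 1 - lam := sub_nonneg.2 hlam
  refine ⟨e10, ?_, ?_, ?_⟩
  · rw [e00, norm_mul]
    exact mul_le_one₀ hA00 (norm_nonneg _) hP00
  · rw [e11, norm_mul]
    exact mul_le_one₀ hA11 (norm_nonneg _) hP11
  rw [e11, norm_mul]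
  set p := ‖P 0 1‖
  set w := ‖P 1 1‖
  have hp : 0 ≤ p := norm_nonneg _
  have hw : 0 ≤ w := norm_nonneg _
  have h01 : ‖(A * P) 0 1‖ ≤ ‖A 0 0‖ * p + ‖A 0 1‖ * w := by
    rw [e01, ← norm_mul, ← norm_mul]
    exact norm_add_le _ _
  have hoff : ‖A 0 1‖ * w ≤ M * w := mul_le_mul_of_nonneg_right hA01 hw
  rcases hcontract with hA01_zero | hc00 | hc11
  · rw [hA01_zero, norm_zero, zero_mul, add_zero] at h01
    nlinarith [mul_le_mul_of_nonneg_right hA00 hp, mul_le_mul_of_nonneg_right hA11 hw]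
  · have hlam0 : 0 ≤ lam := (norm_nonneg _).trans hc00.le
    nlinarith [mul_le_mul_of_nonneg_right hc00.le hp, mul_le_mul_of_nonneg_right hA11 hw,
      mul_le_mul_of_nonneg_left h01 h1lam, mul_le_mul_of_nonneg_left hoff h1lam,
      mul_le_mul_of_nonneg_left hpot hlam0, mul_nonneg (mul_nonneg hM h1lam) (sub_nonneg.2 hP11)]
  · nlinarith [mul_le_mul_of_nonneg_right hA00 hp, mul_le_mul_of_nonneg_right hc11.le hw]

lemma TriangularBound.opNormC_le {lam M : ℝ} (hlam : lam < 1) {P : Matrix (Fin 2) (Fin 2) ℂ}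
    (hP : TriangularBound lam M P) : opNormC P ≤ 1 + 2 * M / (1 - lam) := by
  obtain ⟨h10, h00, h11, hpot⟩ := hP
  have hM : 0 ≤ M := by nlinarith [norm_nonneg (P 0 1), norm_nonneg (P 1 1)]
  have h01 : ‖P 0 1‖ ≤ 2 * M / (1 - lam) := by
    rw [le_div_iff₀ (sub_pos.2 hlam)]
    nlinarith [mul_nonneg hM (norm_nonneg (P 1 1))]
  linarith [opNormC_le_of_upper h10 h00 h11]

lemma triangularBound_prodW {N : ℕ} {A : Fin N → Matrix (Fin 2) (Fin 2) ℂ} {lam M : ℝ}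
    (hlam : lam ≤ 1) (hM : 0 ≤ M) (htri : ∀ j, A j 1 0 = 0)
    (hdiag : ∀ j, ‖A j 0 0‖ ≤ 1 ∧ ‖A j 1 1‖ ≤ 1)
    (hcontract : ∀ j, A j 0 1 = 0 ∨ ‖A j 0 0‖ < lam ∨ ‖A j 1 1‖ < lam)
    (hoff : ∀ j, ‖A j 0 1‖ ≤ M) (σ : ℕ → Fin N) :
    ∀ n, TriangularBound lam M (prodW A σ n)
  | 0 => triangularBound_one hM
  | n + 1 => (triangularBound_prodW hlam hM htri hdiag hcontract hoff σ n).mul_left hlam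
      (htri _) (hdiag _).1 (hdiag _).2 (hcontract _) (hoff _)

theorem stmt10_general {N : ℕ} (A : Fin N → Matrix (Fin 2) (Fin 2) ℂ)
    (lam M : ℝ) (hlam1 : lam < 1) (hM : 0 < M)
    (htri : ∀ j, A j 1 0 = 0)
    (hdiag : ∀ j, ‖A j 0 0‖ ≤ 1 ∧ ‖A j 1 1‖ ≤ 1)
    (hcontract : ∀ j, A j 0 1 = 0 ∨ ‖A j 0 0‖ < lam ∨ ‖A j 1 1‖ < lam)
    (hoff : ∀ j, ‖A j 0 1‖ ≤ M) :
    ∀ n : ℕ, 1 ≤ n → ∀ σ : ℕ → Fin N, opNormC (prodW A σ n) ≤ 1 + 2 * M / (1 - lam) :=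
  fun n _ σ =>
    (triangularBound_prodW hlam1.le hM.le htri hdiag hcontract hoff σ n).opNormC_le hlam1

/-- uniform bound 1 + 2M/(1−λ) for products of upper triangular
matrices whose diagonal entries have modulus ≤ 1, each matrix being either
diagonal or having a diagonal entry of modulus < λ, with off-diagonal entries
bounded by M. -/
theorem stmt10 {N : ℕ} (hN : 0 < N) (A : Fin N → Matrix (Fin 2) (Fin 2) ℂ)
    (lam M : ℝ) (hlam : 0 < lam) (hlam1 : lam < 1) (hM : 0 < M)
    (htri : ∀ j, A j 1 0 = 0)
    (hdiag : ∀ j, ‖A j 0 0‖ ≤ 1 ∧ ‖A j 1 1‖ ≤ 1)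
    (hcontract : ∀ j, A j 0 1 = 0 ∨ ‖A j 0 0‖ < lam ∨ ‖A j 1 1‖ < lam)
    (hoff : ∀ j, ‖A j 0 1‖ ≤ M) :
    ∀ n : ℕ, 1 ≤ n → ∀ σ : ℕ → Fin N, opNormC (prodW A σ n) ≤ 1 + 2 * M / (1 - lam) :=
  stmt10_general A lam M hlam1 hM htri hdiag hcontract hoff
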